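/- arXiv:0709.1787 — 4 statements merged into one kernel-verified Lean document; each statement's English description precedes it below -/
import Mathlib

section
/- Let $k \ge 1$ and let $F$ be a finite forest (a simple graph with no cycles) on $n$ vertices. Then there exists a set $S$ of vertices of $F$ with $|S| \ge n \cdot (1 - 1/(k+1))$ such that every connected component of the induced subgraph $F[S]$ has at most $k$ vertices. Equivalently, $N(F, \mathcal{C}_k) \ge n(1 - (k+1)^{-1})$. -/
open SimpleGraph

/-- Every connected component of `G` has at most `k` vertices. -/
def componentsAtMost {V : Type*} (G : SimpleGraph V) (k : ℕ) : Prop :=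
  ∀ v : V, ((G.connectedComponentMk v).supp).ncard ≤ k

/-!
Cut the forest at a vertex `u` carrying a piece `T` of more than `k` vertices such that every
component of `T \ {u}` has at most `k` vertices: this discards one vertex out of at least `k + 1`,
and `T \ {u}` touches the rest only through `u`, so we may recurse on the remaining vertices.
Such a piece is found by shrinking: if some component `D` of `T \ {u}` is still too large, then
by acyclicity `D` has at most one neighbour of `u`, and `D` cut at that vertex is a smaller piece.
-/

namespace SimpleGraph

variable {V : Type*} {G : SimpleGraph V}

/-- The vertex set of the component of `v` in `G[S]`, seen in `V`; empty if `v ∉ S`. -/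
def componentIn (G : SimpleGraph V) (S : Set V) (v : V) : Set V :=
  {w | ∃ (hv : v ∈ S) (hw : w ∈ S), (G.induce S).Reachable ⟨v, hv⟩ ⟨w, hw⟩}

lemma componentIn_subset (S : Set V) (v : V) : G.componentIn S v ⊆ S :=
  fun _ ⟨_, hw, _⟩ ↦ hw

lemma mem_componentIn_self {S : Set V} {v : V} (hv : v ∈ S) : v ∈ G.componentIn S v :=
  ⟨hv, hv, .refl _⟩

lemma mem_componentIn_of_adj {S : Set V} {v x y : V} (hx : x ∈ G.componentIn S v)
    (hy : y ∈ S) (hxy : G.Adj x y) : y ∈ G.componentIn S v := by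
  obtain ⟨hv, hx, hvx⟩ := hx
  exact ⟨hv, hy, hvx.trans (Adj.reachable (G := G.induce S) (u := ⟨x, hx⟩) (v := ⟨y, hy⟩) hxy)⟩

lemma componentIn_subset_of_closed {S P : Set V} {v : V}
    (hP : ∀ x ∈ P, ∀ y ∈ S, G.Adj x y → y ∈ P) (hv : v ∈ P) : G.componentIn S v ⊆ P := by
  suffices ∀ (a b : S) (p : (G.induce S).Walk a b), a.1 ∈ P → b.1 ∈ P from
    fun w ⟨_, _, ⟨p⟩⟩ ↦ this _ _ p hv
  intro a b p
  induction p with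
  | nil => exact id
  | cons h _ ih => exact fun ha ↦ ih (hP _ ha _ (Subtype.prop _) h)

lemma componentIn_union_subset_left {A B : Set V} {v : V}
    (hAB : ∀ a ∈ A, ∀ b ∈ B, ¬G.Adj a b) (hv : v ∈ A) :
    G.componentIn (A ∪ B) v ⊆ G.componentIn A v := by
  refine componentIn_subset_of_closed (fun x hx y hy hxy ↦ ?_) (mem_componentIn_self hv)
  have hyA : y ∈ A := hy.resolve_right fun hyB ↦ hAB x (componentIn_subset A v hx) y hyB hxy
  exact mem_componentIn_of_adj hx hyA hxy

lemma exists_walk_of_mem_componentIn {S : Set V} {v x y : V} (hx : x ∈ G.componentIn S v)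
    (hy : y ∈ G.componentIn S v) : ∃ p : G.Walk x y, ∀ z ∈ p.support, z ∈ S := by
  obtain ⟨hv, hx, hvx⟩ := hx
  obtain ⟨_, hy, hvy⟩ := hy
  obtain ⟨q⟩ := hvx.symm.trans hvy
  refine ⟨(q.map (Embedding.induce S).toHom : G.Walk x y), fun z hz ↦ ?_⟩
  obtain ⟨z, -, rfl⟩ := List.mem_map.mp (Walk.support_map _ q ▸ hz)
  exact z.2

lemma image_val_supp_connectedComponentMk (S : Set V) (v : S) :
    Subtype.val '' ((G.induce S).connectedComponentMk v).supp = G.componentIn S v := by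
  ext w
  simp only [Set.mem_image, ConnectedComponent.mem_supp_iff, ConnectedComponent.eq]
  exact ⟨fun ⟨w', hw', hw⟩ ↦ hw ▸ ⟨v.2, w'.2, hw'.symm⟩,
    fun ⟨_, hw, hvw⟩ ↦ ⟨⟨w, hw⟩, hvw.symm, rfl⟩⟩

lemma componentsAtMost_induce_iff {S : Set V} {k : ℕ} :
    componentsAtMost (G.induce S) k ↔ ∀ v ∈ S, (G.componentIn S v).ncard ≤ k := by
  simp only [componentsAtMost, Subtype.forall]
  refine forall₂_congr fun v hv ↦ ?_
  rw [← image_val_supp_connectedComponentMk S ⟨v, hv⟩,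
    Set.ncard_image_of_injective _ Subtype.val_injective]

lemma componentsAtMost_induce_of_ncard_le [Finite V] {S : Set V} {k : ℕ} (hS : S.ncard ≤ k) :
    componentsAtMost (G.induce S) k :=
  componentsAtMost_induce_iff.mpr fun v _ ↦ (Set.ncard_le_ncard (componentIn_subset S v)).trans hS

lemma componentsAtMost_induce_union [Finite V] {A B : Set V} {k : ℕ}
    (hAB : ∀ a ∈ A, ∀ b ∈ B, ¬G.Adj a b)
    (hA : componentsAtMost (G.induce A) k) (hB : componentsAtMost (G.induce B) k) :
    componentsAtMost (G.induce (A ∪ B)) k := by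
  rw [componentsAtMost_induce_iff] at *
  rintro v (hv | hv)
  · exact (Set.ncard_le_ncard (componentIn_union_subset_left hAB hv)).trans (hA v hv)
  · rw [Set.union_comm]
    exact (Set.ncard_le_ncard (componentIn_union_subset_left
      (fun b hb a ha h ↦ hAB a ha b hb h.symm) hv)).trans (hB v hv)

lemma IsAcyclic.eq_of_adj_of_adj_of_walk (hG : G.IsAcyclic) {a b u : V} (p : G.Walk a b)
    (hu : u ∉ p.support) (ha : G.Adj a u) (hb : G.Adj b u) : a = b := by
  by_contra hab
  have he := isBridge_iff_forall_walk_mem_edges.mp (isAcyclic_iff_forall_adj_isBridge.mp hG ha)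
    (p.concat hb)
  rw [Walk.edges_concat, List.concat_eq_append, List.mem_append, List.mem_singleton,
    Sym2.eq_iff] at he
  rcases he with he | ⟨rfl, -⟩ | ⟨rfl, -⟩
  exacts [hu (p.snd_mem_support_of_mem_edges he), hab rfl, hu p.start_mem_support]

lemma IsAcyclic.exists_unique_adj_mem_componentIn (hG : G.IsAcyclic) {S : Set V} {u : V}
    (hu : u ∉ S) {v : V} (hv : v ∈ S) :
    ∃ d ∈ G.componentIn S v, ∀ y ∈ G.componentIn S v, G.Adj y u → y = d := by
  by_cases h : ∃ d ∈ G.componentIn S v, G.Adj d u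
  · obtain ⟨d, hd, hdu⟩ := h
    refine ⟨d, hd, fun y hy hyu ↦ ?_⟩
    obtain ⟨p, hp⟩ := exists_walk_of_mem_componentIn hy hd
    exact hG.eq_of_adj_of_adj_of_walk p (fun hu' ↦ hu (hp u hu')) hyu hdu
  · simp only [not_exists, not_and] at h
    exact ⟨v, mem_componentIn_self hv, fun y hy hyu ↦ absurd hyu (h y hy)⟩

/-- Inside `G[W]`, the set `T` is attached to the rest of `W` only through `u`. -/
structure IsBranchAt (G : SimpleGraph V) (W T : Set V) (u : V) : Prop where
  mem : u ∈ T
  subset : T ⊆ W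
  mem_of_adj : ∀ x ∈ T \ {u}, ∀ y ∈ W, G.Adj x y → y ∈ T

lemma isBranchAt_self {W : Set V} {u : V} (hu : u ∈ W) : G.IsBranchAt W W u :=
  ⟨hu, subset_rfl, fun _ _ _ hy _ ↦ hy⟩

lemma IsBranchAt.not_adj {W T : Set V} {u : V} (h : G.IsBranchAt W T u) :
    ∀ a ∈ T \ {u}, ∀ b ∈ W \ T, ¬G.Adj a b :=
  fun a ha b hb hab ↦ hb.2 (h.mem_of_adj a ha b hb.1 hab)

lemma IsAcyclic.exists_isBranchAt_componentIn (hG : G.IsAcyclic) {W T : Set V} {u v : V}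
    (h : G.IsBranchAt W T u) (hv : v ∈ T \ {u}) :
    ∃ d, G.IsBranchAt W (G.componentIn (T \ {u}) v) d := by
  obtain ⟨d, hd, huniq⟩ := hG.exists_unique_adj_mem_componentIn (u := u) (by simp) hv
  refine ⟨d, hd, (componentIn_subset _ _).trans (Set.sdiff_subset.trans h.subset),
    fun x hx y hy hxy ↦ ?_⟩
  have hyT : y ∈ T := h.mem_of_adj x (componentIn_subset _ _ hx.1) y hy hxy
  have hyu : y ≠ u := by
    rintro rfl
    exact hx.2 (huniq x hx.1 hxy)
  exact mem_componentIn_of_adj hx.1 ⟨hyT, hyu⟩ hxy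

lemma IsAcyclic.exists_isBranchAt_componentsAtMost [Finite V] (hG : G.IsAcyclic) {W T : Set V}
    {u : V} {k : ℕ} (h : G.IsBranchAt W T u) (hk : k < T.ncard) :
    ∃ T' u', G.IsBranchAt W T' u' ∧ k < T'.ncard ∧ componentsAtMost (G.induce (T' \ {u'})) k := by
  induction hn : T.ncard using Nat.strong_induction_on generalizing T u with
  | _ n ih =>
  by_cases hsmall : componentsAtMost (G.induce (T \ {u})) k
  · exact ⟨T, u, h, hk, hsmall⟩
  simp only [componentsAtMost_induce_iff, not_forall, not_le, exists_prop] at hsmall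
  obtain ⟨v, hv, hbig⟩ := hsmall
  obtain ⟨d, hd⟩ := hG.exists_isBranchAt_componentIn h hv
  have hlt : (G.componentIn (T \ {u}) v).ncard < n :=
    hn ▸ (Set.ncard_le_ncard (componentIn_subset _ _)).trans_lt
      (Set.ncard_sdiff_singleton_lt_of_mem h.mem)
  exact ih _ hlt hd hbig rfl

theorem IsAcyclic.exists_subset_componentsAtMost [Finite V] (hG : G.IsAcyclic) (k : ℕ)
    (W : Set V) : ∃ S ⊆ W, componentsAtMost (G.induce S) k ∧ k * W.ncard ≤ (k + 1) * S.ncard := by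
  induction hn : W.ncard using Nat.strong_induction_on generalizing W with
  | _ n ih =>
  subst hn
  by_cases hW : W.ncard ≤ k
  · exact ⟨W, subset_rfl, componentsAtMost_induce_of_ncard_le hW,
    Nat.mul_le_mul_right _ k.le_succ⟩
  obtain ⟨u, hu⟩ : W.Nonempty := Set.nonempty_of_ncard_ne_zero (by omega)
  obtain ⟨T, v, hT, hkT, hTsmall⟩ :=
    hG.exists_isBranchAt_componentsAtMost (isBranchAt_self hu) (not_le.mp hW)
  have hTW : (W \ T).ncard + T.ncard = W.ncard := Set.ncard_sdiff_add_ncard_of_subset hT.subset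
  obtain ⟨S, hSW, hS, hcount⟩ := ih _ (by omega) (W \ T) rfl
  refine ⟨(T \ {v}) ∪ S, Set.union_subset (Set.sdiff_subset.trans hT.subset)
    (hSW.trans Set.sdiff_subset), componentsAtMost_induce_union
    (fun a ha b hb ↦ hT.not_adj a ha b (hSW hb)) hTsmall hS, ?_⟩
  have hTv : (T \ {v}).ncard + 1 = T.ncard := Set.ncard_sdiff_singleton_add_one hT.mem
  have hdisj : Disjoint (T \ {v}) S :=
    Set.disjoint_left.mpr fun x hx hxS ↦ (hSW hxS).2 hx.1
  rw [Set.ncard_union_eq hdisj]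
  nlinarith

end SimpleGraph

theorem forest_dismantle_general {V : Type*} [Fintype V] (F : SimpleGraph V) (hF : F.IsAcyclic)
    (k : ℕ) (n : ℕ) (hn : n = Fintype.card V) :
    ∃ S : Set V, componentsAtMost (F.induce S) k ∧
      (n : ℝ) * (1 - 1 / (k + 1)) ≤ S.ncard := by
  obtain ⟨S, -, hS, hcount⟩ := hF.exists_subset_componentsAtMost k Set.univ
  refine ⟨S, hS, ?_⟩
  rw [Set.ncard_univ, Nat.card_eq_fintype_card, ← hn] at hcount
  have hcount' : (k : ℝ) * n ≤ (k + 1) * S.ncard := by exact_mod_cast hcount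
  rw [one_sub_div (by positivity), add_sub_cancel_right, mul_div_assoc',
    div_le_iff₀ (by positivity)]
  linarith

/-- If `F` is a finite forest on `n` vertices and `k ≥ 1`, then there is a
set `S` of vertices with `|S| ≥ n (1 - 1/(k+1))` such that every connected component of the
induced subgraph `F[S]` has at most `k` vertices. -/
theorem forest_dismantle {V : Type*} [Fintype V] (F : SimpleGraph V) (hF : F.IsAcyclic)
    (k : ℕ) (hk : 1 ≤ k) (n : ℕ) (hn : n = Fintype.card V) :
    ∃ S : Set V, componentsAtMost (F.induce S) k ∧
      (n : ℝ) * (1 - 1 / (k + 1)) ≤ S.ncard :=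
  forest_dismantle_general F hF k n hn
end

section
/- In a finite tree $F$ with more than $k+1$ vertices, call an edge $e$ red if both connected components of $F - e$ have more than $k$ vertices. Then the set of red edges, if nonempty, spans a connected subgraph of $F$ (i.e., the red edges form a subtree). -/
open SimpleGraph

/-- An edge `e` of the tree `F` is *red* (with parameter `k`) if it is an edge of `F` and both
connected components of `F - e` (namely the components containing the two endpoints of `e`)
have more than `k` vertices. -/
def redEdge {V : Type*} (F : SimpleGraph V) (k : ℕ) (e : Sym2 V) : Prop :=
  e ∈ F.edgeSet ∧ ∀ w ∈ e, k < (((F.deleteEdges {e}).connectedComponentMk w).supp).ncard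

/-! A red edge `f` certifies that both sides of `F - f` are large. For any other edge `g`, one
endpoint `z` of `f` is separated in `F - f` from `g`, so the whole side of `z` survives in `F - g`,
and it stays attached to both endpoints of `f`; hence the component of `F - g` containing `f` is
large. Now if `x`, `y` are endpoints of red edges, every edge `g` of the `F`-path from `x` to `y`
has `x` on one side and `y` on the other, so both sides are large and `g` is red: the red edges
connect any two of their endpoints. -/

namespace SimpleGraph

variable {V : Type*} {G : SimpleGraph V}

lemma preconnected_induce_support_of_reachable
    (h : ∀ u ∈ G.support, ∀ v ∈ G.support, G.Reachable u v) :
    (G.induce G.support).Preconnected := by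
  rintro ⟨u, hu⟩ ⟨v, hv⟩
  obtain ⟨p⟩ := h u hu v hv
  by_cases hp : p.Nil
  · obtain rfl := hp.eq
    rfl
  · exact ⟨p.induce _ fun _ hx => mem_support_of_mem_walk_support p hp hx⟩

lemma reachable_of_mem_of_mem_edgeSet {e : Sym2 V} (he : e ∈ G.edgeSet) {x y : V}
    (hx : x ∈ e) (hy : y ∈ e) : G.Reachable x y := by
  induction e using Sym2.ind with
  | h a b =>
    have hab : G.Reachable a b := (G.mem_edgeSet.mp he).reachable
    rcases Sym2.mem_iff.mp hx with rfl | rfl <;> rcases Sym2.mem_iff.mp hy with rfl | rfl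
    exacts [.rfl, hab, hab.symm, .rfl]

lemma IsAcyclic.exists_mem_not_reachable_deleteEdges (hG : G.IsAcyclic) {e : Sym2 V}
    (he : e ∈ G.edgeSet) (c : V) : ∃ z ∈ e, ¬ (G.deleteEdges {e}).Reachable z c := by
  induction e using Sym2.ind with
  | h x y =>
    have hxy : ¬ (G.deleteEdges {s(x, y)}).Reachable x y :=
      isBridge_iff.mp (isAcyclic_iff_forall_isBridge.mp hG he)
    by_contra! hc
    exact hxy ((hc x (by simp)).trans (hc y (by simp)).symm)

lemma Reachable.deleteEdges_of_not_reachable {f g : Sym2 V} {a c v : V} (hcg : c ∈ g)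
    (hac : ¬ (G.deleteEdges {f}).Reachable a c) (hav : (G.deleteEdges {f}).Reachable a v) :
    (G.deleteEdges {g}).Reachable a v := by
  classical
  obtain ⟨p⟩ := hav
  have hg : g ∉ p.edges := fun hg =>
    hac ⟨p.takeUntil c (Walk.mem_support_of_mem_edges hg hcg)⟩
  refine (p.toDeleteEdge g hg).reachable.mono ?_
  rw [deleteEdges_deleteEdges]
  exact deleteEdges_anti Set.subset_union_right

lemma ncard_supp_deleteEdges_le [Finite V] {f g : Sym2 V} {a c : V} (hcg : c ∈ g)
    (hac : ¬ (G.deleteEdges {f}).Reachable a c) :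
    ((G.deleteEdges {f}).connectedComponentMk a).supp.ncard ≤
      ((G.deleteEdges {g}).connectedComponentMk a).supp.ncard := by
  refine Set.ncard_le_ncard (fun v hv => ?_) (Set.toFinite _)
  rw [ConnectedComponent.mem_supp_iff, ConnectedComponent.eq] at hv ⊢
  exact (hv.symm.deleteEdges_of_not_reachable hcg hac).symm

end SimpleGraph

namespace redEdge

variable {V : Type*} [Finite V] {F : SimpleGraph V} {k : ℕ}

lemma lt_ncard_supp_deleteEdges (hF : F.IsAcyclic) {f : Sym2 V} (hf : redEdge F k f)
    (g : Sym2 V) {x : V} (hx : x ∈ f) :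
    k < ((F.deleteEdges {g}).connectedComponentMk x).supp.ncard := by
  by_cases hfg : f = g
  · subst hfg
    exact hf.2 x hx
  obtain ⟨c, hcg⟩ : ∃ c, c ∈ g := Sym2.ind (fun c _ => ⟨c, Sym2.mem_mk_left c _⟩) g
  obtain ⟨z, hzf, hzc⟩ := hF.exists_mem_not_reachable_deleteEdges hf.1 c
  have hfg' : f ∈ (F.deleteEdges {g}).edgeSet := by
    rw [edgeSet_deleteEdges]
    exact ⟨hf.1, hfg⟩
  calc k < ((F.deleteEdges {f}).connectedComponentMk z).supp.ncard := hf.2 z hzf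
    _ ≤ ((F.deleteEdges {g}).connectedComponentMk z).supp.ncard :=
      ncard_supp_deleteEdges_le hcg hzc
    _ = ((F.deleteEdges {g}).connectedComponentMk x).supp.ncard := by
      rw [ConnectedComponent.sound (reachable_of_mem_of_mem_edgeSet hfg' hx hzf)]

lemma of_mem_edges_of_isPath (hF : F.IsAcyclic) {x y : V} {p : F.Walk x y} (hp : p.IsPath)
    (hx : ∃ e, redEdge F k e ∧ x ∈ e) (hy : ∃ e, redEdge F k e ∧ y ∈ e) :
    ∀ e ∈ p.edges, redEdge F k e := by
  induction p with
  | nil => simp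
  | @cons u v w huv q ih =>
    obtain ⟨hq, hu⟩ := (Walk.cons_isPath_iff huv q).mp hp
    obtain ⟨ey, hey, hyey⟩ := hy
    have hred : redEdge F k s(u, v) := by
      refine ⟨huv, fun z hz => ?_⟩
      rcases Sym2.mem_iff.mp hz with rfl | rfl
      · obtain ⟨ex, hex, hxex⟩ := hx
        exact hex.lt_ncard_supp_deleteEdges hF _ hxex
      · have hzw : (F.deleteEdges {s(u, z)}).Reachable z w :=
          (q.toDeleteEdge _ fun he => hu (q.fst_mem_support_of_mem_edges he)).reachable
        rw [ConnectedComponent.sound hzw]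
        exact hey.lt_ncard_supp_deleteEdges hF _ hyey
    intro e he
    rw [Walk.edges_cons, List.mem_cons] at he
    rcases he with rfl | he
    · exact hred
    · exact ih hq ⟨_, hred, Sym2.mem_mk_right u v⟩ ⟨ey, hey, hyey⟩ e he

end redEdge

theorem red_edges_connected_general {V : Type*} [Fintype V] (F : SimpleGraph V) (hF : F.IsTree)
    (k : ℕ) (hne : ∃ e, redEdge F k e) :
    ((F.deleteEdges {e | ¬ redEdge F k e}).induce
      (F.deleteEdges {e | ¬ redEdge F k e}).support).Connected := by
  set G := F.deleteEdges {e | ¬ redEdge F k e}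
  have hG : ∀ e, e ∈ G.edgeSet ↔ redEdge F k e := fun e => by
    simp only [G, edgeSet_deleteEdges, Set.mem_sdiff, Set.mem_ofPred_eq, not_not]
    exact and_iff_right_of_imp (·.1)
  refine (connected_iff _).2 ⟨preconnected_induce_support_of_reachable ?_, ?_⟩
  · rintro u ⟨u', hu⟩ v ⟨v', hv⟩
    obtain ⟨p, hp⟩ := hF.connected.preconnected.exists_isPath u v
    have hpred := redEdge.of_mem_edges_of_isPath hF.isAcyclic hp
      ⟨_, (hG _).1 hu, Sym2.mem_mk_left u u'⟩ ⟨_, (hG _).1 hv, Sym2.mem_mk_left v v'⟩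
    exact ⟨p.transfer G fun e he => (hG e).2 (hpred e he)⟩
  · obtain ⟨e, he⟩ := hne
    induction e using Sym2.ind with
    | h a b => exact ⟨⟨a, b, (hG _).2 he⟩⟩

/-- In a finite tree `F` with more than `k+1` vertices, if the set of red
edges is nonempty, then the red edges span a connected subgraph of `F`: the subgraph of `F`
consisting precisely of the red edges, induced on the set of vertices incident to some red
edge, is connected. -/
theorem red_edges_connected {V : Type*} [Fintype V] (F : SimpleGraph V) (hF : F.IsTree)
    (k : ℕ) (hk : 1 ≤ k) (hcard : k + 1 < Fintype.card V)
    (hne : ∃ e, redEdge F k e) :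
    ((F.deleteEdges {e | ¬ redEdge F k e}).induce
      (F.deleteEdges {e | ¬ redEdge F k e}).support).Connected :=
  red_edges_connected_general F hF k hne
end

section
/- For every finite simple graph $G$ on $n \ge 1$ vertices and every integer $k \ge 1$, $N(G, \mathcal{F}) \ge N(G, \mathcal{C}_k) - n_k(G)$, where $n_k(G)$ is the number of cycles of $G$ with at most $k$ vertices. Equivalently, $\nu(G,\mathcal{F}) \ge \nu(G,\mathcal{C}_k) - n_k(G)/n$. -/
open SimpleGraph

/-- `N(G, 𝒞_k)`: the largest size of a vertex set `S` such that every connected component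
of the induced subgraph `G[S]` has at most `k` vertices. -/
noncomputable def NC {V : Type*} [Fintype V] (G : SimpleGraph V) (k : ℕ) : ℕ :=
  sSup {m | ∃ S : Set V, m = S.ncard ∧
    ∀ v : S, (((G.induce S).connectedComponentMk v).supp).ncard ≤ k}

/-- `N(G, ℱ)`: the largest size of a vertex set `S` such that the induced subgraph `G[S]`
is a forest (acyclic). -/
noncomputable def NF {V : Type*} [Fintype V] (G : SimpleGraph V) : ℕ :=
  sSup {m | ∃ S : Set V, m = S.ncard ∧ (G.induce S).IsAcyclic}

/-- `n_k(G)`: the number of cycles of `G` with at most `k` vertices. A cycle is identified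
with its set of edges (distinct cycles, as subgraphs, have distinct edge sets). -/
noncomputable def cycleCount {V : Type*} (G : SimpleGraph V) (k : ℕ) : ℕ :=
  Set.ncard {E : Set (Sym2 V) | ∃ (v : V) (w : G.Walk v v),
    w.IsCycle ∧ w.length ≤ k ∧ E = {e | e ∈ w.edges}}

/-- Edge sets of cycles of `G` whose support lies inside `S`. -/
def cycEdges {V : Type*} (G : SimpleGraph V) (S : Set V) : Set (Set (Sym2 V)) :=
  {E | ∃ (v : V) (w : G.Walk v v), w.IsCycle ∧ (∀ x ∈ w.support, x ∈ S) ∧ E = {e | e ∈ w.edges}}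

lemma acyclic_of_cycEdges_empty {V : Type*} (G : SimpleGraph V) (S : Set V)
    (h : cycEdges G S = ∅) : (G.induce S).IsAcyclic := by
  intro v w hw
  have hmap : (w.map (SimpleGraph.Embedding.induce S).toHom).IsCycle :=
    hw.map (Subtype.val_injective)
  have hsupp : ∀ x ∈ (w.map (SimpleGraph.Embedding.induce S).toHom).support, x ∈ S := by
    intro x hx
    rw [SimpleGraph.Walk.support_map] at hx
    obtain ⟨y, _, rfl⟩ := List.mem_map.mp hx
    exact y.2
  have : {e | e ∈ (w.map (SimpleGraph.Embedding.induce S).toHom).edges} ∈ cycEdges G S :=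
    ⟨_, _, hmap, hsupp, rfl⟩
  simp [h] at this

lemma reach_of_mem_support {V : Type*} (G : SimpleGraph V) (S : Set V) :
    ∀ {a b : V} (w : G.Walk a b) (hs : ∀ x ∈ w.support, x ∈ S) (ha : a ∈ S)
      {x : V} (hx : x ∈ w.support),
      (G.induce S).Reachable ⟨a, ha⟩ ⟨x, hs x hx⟩ := by
  intro a b w
  induction w with
  | nil =>
    intro hs ha x hx
    simp only [SimpleGraph.Walk.support_nil, List.mem_singleton] at hx
    subst hx; exact Reachable.refl _
  | @cons a c b h q ih =>
    intro hs ha x hx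
    rw [SimpleGraph.Walk.support_cons, List.mem_cons] at hx
    rcases hx with rfl | hx
    · exact Reachable.refl _
    · have hc : c ∈ S := hs c (by simp [SimpleGraph.Walk.support_cons])
      have hadj : (G.induce S).Adj ⟨a, ha⟩ ⟨c, hc⟩ := by simp [h]
      exact hadj.reachable.trans
        (ih (fun y hy => hs y (by simp [SimpleGraph.Walk.support_cons, hy])) hc hx)

/-- A cycle whose support lies in a set `S` all of whose `G[S]`-components have at most `k`
vertices has length at most `k`. -/
lemma length_le_of_comp {V : Type*} [Fintype V] (G : SimpleGraph V) (S : Set V) (k : ℕ)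
    (hS : ∀ v : S, (((G.induce S).connectedComponentMk v).supp).ncard ≤ k)
    {v : V} (w : G.Walk v v) (hw : w.IsCycle) (hs : ∀ x ∈ w.support, x ∈ S) :
    w.length ≤ k := by
  classical
  have hv : v ∈ S := hs v w.start_mem_support
  set C := (G.induce S).connectedComponentMk ⟨v, hv⟩ with hC
  have hsub : (w.support.tail.toFinset : Set V) ⊆ Subtype.val '' C.supp := by
    intro x hx
    simp only [List.coe_toFinset, Set.mem_setOf_eq] at hx
    have hxs : x ∈ w.support := List.mem_of_mem_tail hx
    have hr := reach_of_mem_support G S w hs hv hxs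
    refine ⟨⟨x, hs x hxs⟩, ?_, rfl⟩
    rw [SimpleGraph.ConnectedComponent.mem_supp_iff, hC, SimpleGraph.ConnectedComponent.eq]
    exact hr.symm
  have h1 : w.support.tail.toFinset.card ≤ (Subtype.val '' C.supp).ncard := by
    rw [← Set.ncard_coe_finset]
    exact Set.ncard_le_ncard hsub (Set.toFinite _)
  have h2 : w.support.tail.toFinset.card = w.support.tail.length :=
    List.toFinset_card_of_nodup hw.support_nodup
  have h3 : w.support.tail.length = w.length := by
    rw [List.length_tail, SimpleGraph.Walk.length_support]; omega
  have h4 : (Subtype.val '' C.supp).ncard = C.supp.ncard :=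
    Set.ncard_image_of_injective _ Subtype.val_injective
  have h5 : C.supp.ncard ≤ k := hS ⟨v, hv⟩
  omega

lemma ncard_le_NF_add {V : Type*} [Fintype V] (G : SimpleGraph V) :
    ∀ (N : ℕ) (S : Set V), (cycEdges G S).ncard = N → S.ncard ≤ NF G + N := by
  have hbdd : BddAbove {m | ∃ S : Set V, m = S.ncard ∧ (G.induce S).IsAcyclic} := by
    refine ⟨Fintype.card V, ?_⟩
    rintro m ⟨S, rfl, -⟩
    calc S.ncard ≤ (Set.univ : Set V).ncard :=
          Set.ncard_le_ncard (Set.subset_univ S) Set.finite_univ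
      _ = Fintype.card V := by rw [Set.ncard_univ, Nat.card_eq_fintype_card]
  intro N
  induction N using Nat.strong_induction_on with
  | _ N ih =>
    intro S hN
    by_cases hE : cycEdges G S = ∅
    · have hac := acyclic_of_cycEdges_empty G S hE
      have : S.ncard ≤ NF G := le_csSup hbdd ⟨S, rfl, hac⟩
      omega
    · obtain ⟨E, v, w, hw, hs, hEe⟩ := Set.nonempty_iff_ne_empty.mpr hE
      have hv : v ∈ S := hs v w.start_mem_support
      set S' := S \ {v} with hS'
      have hsub : cycEdges G S' ⊆ cycEdges G S := by
        rintro E' ⟨u, w', h1, h2, h3⟩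
        exact ⟨u, w', h1, fun x hx => (h2 x hx).1, h3⟩
      have hnot : E ∉ cycEdges G S' := by
        rintro ⟨u, w', hw', hs', hE'⟩
        obtain ⟨u2, hadj, q, rfl⟩ := SimpleGraph.Walk.not_nil_iff.mp hw.not_nil
        have he : s(v, u2) ∈ (SimpleGraph.Walk.cons hadj q).edges := by
          simp [SimpleGraph.Walk.edges_cons]
        have heE : s(v, u2) ∈ E := by rw [hEe]; exact he
        have he' : s(v, u2) ∈ w'.edges := by rw [hE'] at heE; exact heE
        have hvs' : v ∈ w'.support := SimpleGraph.Walk.fst_mem_support_of_mem_edges w' he'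
        exact (hs' v hvs').2 rfl
      have hss : cycEdges G S' ⊂ cycEdges G S :=
        ⟨hsub, fun h => hnot (h ⟨v, w, hw, hs, hEe⟩)⟩
      have hlt : (cycEdges G S').ncard < N := by
        rw [← hN]
        exact Set.ncard_lt_ncard hss (Set.toFinite _)
      have hIH := ih _ hlt S' rfl
      have hcard : S'.ncard + 1 = S.ncard :=
        Set.ncard_diff_singleton_add_one hv (Set.toFinite _)
      omega

/-- For every finite simple graph `G` on `n ≥ 1` vertices and every `k ≥ 1`,
`N(G, ℱ) ≥ N(G, 𝒞_k) - n_k(G)`, where `n_k(G)` is the number of cycles of `G` with at most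
`k` vertices. -/
theorem NF_ge_NC_sub_cycleCount {V : Type*} [Fintype V] (G : SimpleGraph V)
    (n : ℕ) (hn : n = Fintype.card V) (hn1 : 1 ≤ n) (k : ℕ) (hk : 1 ≤ k) :
    (NC G k : ℝ) - cycleCount G k ≤ NF G := by
  have hne : {m | ∃ S : Set V, m = S.ncard ∧
      ∀ v : S, (((G.induce S).connectedComponentMk v).supp).ncard ≤ k}.Nonempty :=
    ⟨0, ∅, by simp, fun v => absurd v.2 (Set.notMem_empty _)⟩
  have hbdd : BddAbove {m | ∃ S : Set V, m = S.ncard ∧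
      ∀ v : S, (((G.induce S).connectedComponentMk v).supp).ncard ≤ k} := by
    refine ⟨Fintype.card V, ?_⟩
    rintro m ⟨S, rfl, -⟩
    calc S.ncard ≤ (Set.univ : Set V).ncard :=
          Set.ncard_le_ncard (Set.subset_univ S) Set.finite_univ
      _ = Fintype.card V := by rw [Set.ncard_univ, Nat.card_eq_fintype_card]
  have hmem := Nat.sSup_mem hne hbdd
  obtain ⟨S, hScard, hScomp⟩ := hmem
  have h1 : cycEdges G S ⊆ {E : Set (Sym2 V) | ∃ (v : V) (w : G.Walk v v),
      w.IsCycle ∧ w.length ≤ k ∧ E = {e | e ∈ w.edges}} := by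
    rintro E ⟨v, w, hw, hs, hEe⟩
    exact ⟨v, w, hw, length_le_of_comp G S k hScomp w hw hs, hEe⟩
  have h2 : (cycEdges G S).ncard ≤ cycleCount G k :=
    Set.ncard_le_ncard h1 (Set.toFinite _)
  have h3 := ncard_le_NF_add G (cycEdges G S).ncard S rfl
  have hNat : NC G k ≤ NF G + cycleCount G k := by
    rw [show NC G k = S.ncard from hScard]
    omega
  have hR : (NC G k : ℝ) ≤ (NF G : ℝ) + (cycleCount G k : ℝ) := by exact_mod_cast hNat
  linarith
end

section
/- Let $c > 0$ and $\epsilon > 0$. Then there exists $\delta > 0$ such that, with probability tending to $1$ as $n \to \infty$, the Erdős–Rényi random graph $G \in \mathcal{G}(n, c/n)$ has the property that every vertex set $T$ with $|T| \le \delta n$ spans at most $(1+\epsilon/3)|T|$ edges. -/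
/-!
First moment method. If a set `T` of size `t` spans more than `(1 + θ) t` edges, where
`θ = min (ε / 3) 1`, then some `K = ⌊(1 + θ) t⌋ + 1` of its at most `t²` pairs are all edges,
which has probability at most `C(t², K) (c / n) ^ K`. Together with `C(m, k) ≤ (e m / k) ^ k`,
the union bound over the `C(n, t)` choices of `T` gives at most `(C (t / n) ^ θ) ^ t` for a
constant `C`. For `t ≤ δ n` with `δ` small the base is at most `1 / 2` and at most `C t / n ^ θ`,
so summing over `t` bounds the failure probability by `4 C / n ^ θ → 0`.
-/

open SimpleGraph Filter

/-- The probability, in the Erdős–Rényi model `𝒢(n, p)` (each of the `n.choose 2` possible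
edges present independently with probability `p`), that the random graph lies in the set
`A` of graphs on `{1, …, n}`. -/
noncomputable def erProb (n : ℕ) (p : ℝ) (A : Set (SimpleGraph (Fin n))) : ℝ :=
  ∑ G : SimpleGraph (Fin n),
    A.indicator (fun G => p ^ G.edgeSet.ncard * (1 - p) ^ (n.choose 2 - G.edgeSet.ncard)) G

open Finset Real
open scoped Classical

theorem Finset.sum_superset_pow_mul_pow {ι R : Type*} [DecidableEq ι] [CommSemiring R]
    {S E : Finset ι} (hSE : S ⊆ E) (p q : R) :
    ∑ U ∈ E.powerset with S ⊆ U, p ^ #U * q ^ (#E - #U) = p ^ #S * (p + q) ^ (#E - #S) := by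
  have hIcc : {U ∈ E.powerset | S ⊆ U} = Icc S E := by
    ext U; simp [and_comm]
  rw [hIcc, Icc_eq_image_powerset hSE, sum_image, ← card_sdiff_of_subset hSE,
    ← sum_pow_mul_eq_add_pow, mul_sum]
  · refine sum_congr rfl fun V hV => ?_
    have hdisj : Disjoint S V := disjoint_of_subset_right (mem_powerset.1 hV) disjoint_sdiff
    rw [card_union_of_disjoint hdisj, pow_add, mul_assoc, card_sdiff_of_subset hSE,
      Nat.sub_add_eq]
  · intro V hV W hW hVW
    have hV' := disjoint_of_subset_right (mem_powerset.1 hV) disjoint_sdiff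
    have hW' := disjoint_of_subset_right (mem_powerset.1 hW) disjoint_sdiff
    simpa [union_sdiff_cancel_left hV', union_sdiff_cancel_left hW'] using
      congrArg (· \ S) hVW

theorem SimpleGraph.sum_edgeFinset_eq_sum_powerset {V M : Type*} [Fintype V] [DecidableEq V]
    [AddCommMonoid M] (f : Finset (Sym2 V) → M) :
    ∑ G : SimpleGraph V, f G.edgeFinset = ∑ U ∈ (⊤ : SimpleGraph V).edgeFinset.powerset, f U := by
  refine sum_nbij' (fun G => G.edgeFinset) (fun U => fromEdgeSet U) ?_ ?_ ?_ ?_ ?_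
  · exact fun G _ => mem_powerset.2 (edgeFinset_mono le_top)
  · exact fun _ _ => mem_univ _
  · intro G _; simp
  · intro U hU
    have hU' := mem_powerset.1 hU
    ext e
    simp only [mem_edgeFinset, edgeSet_fromEdgeSet, Set.mem_sdiff, mem_coe,
      and_iff_left_iff_imp]
    exact fun he => (⊤ : SimpleGraph V).not_isDiag_of_mem_edgeSet (mem_edgeFinset.1 (hU' he))
  · intro G _; rfl

section erProb

variable {n : ℕ} {p : ℝ}

theorem erProb_setOf_subset_edgeFinset (p : ℝ) {S : Finset (Sym2 (Fin n))}
    (hS : S ⊆ (⊤ : SimpleGraph (Fin n)).edgeFinset) :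
    erProb n p {G | S ⊆ G.edgeFinset} = p ^ #S := by
  have hN : n.choose 2 = #(⊤ : SimpleGraph (Fin n)).edgeFinset := by
    rw [card_edgeFinset_top_eq_card_choose_two, Fintype.card_fin]
  simp only [erProb, Set.indicator_apply, Set.mem_ofPred_eq, ← coe_edgeFinset,
    Set.ncard_coe_finset]
  rw [sum_edgeFinset_eq_sum_powerset
      (fun U => if S ⊆ U then p ^ #U * (1 - p) ^ (n.choose 2 - #U) else 0),
    ← sum_filter, hN, sum_superset_pow_mul_pow hS, add_sub_cancel, one_pow, mul_one]

theorem erProb_univ (p : ℝ) : erProb n p Set.univ = 1 := by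
  simpa using erProb_setOf_subset_edgeFinset (n := n) p (empty_subset _)

theorem erProb_compl (p : ℝ) (A : Set (SimpleGraph (Fin n))) :
    erProb n p Aᶜ = 1 - erProb n p A := by
  rw [eq_sub_iff_add_eq, ← erProb_univ (n := n) p, erProb, erProb, erProb, ← sum_add_distrib]
  simp only [← Set.indicator_union_of_disjoint disjoint_compl_left, Set.compl_union_self]

theorem erProb_mono (hp₀ : 0 ≤ p) (hp₁ : p ≤ 1) {A B : Set (SimpleGraph (Fin n))}
    (hAB : A ⊆ B) :
    erProb n p A ≤ erProb n p B := by
  have := sub_nonneg.2 hp₁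
  exact sum_le_sum fun G _ => Set.indicator_le_indicator_of_subset hAB (fun G => by positivity) G

theorem erProb_le_one (hp₀ : 0 ≤ p) (hp₁ : p ≤ 1) (A : Set (SimpleGraph (Fin n))) :
    erProb n p A ≤ 1 :=
  erProb_univ (n := n) p ▸ erProb_mono hp₀ hp₁ (Set.subset_univ A)

theorem erProb_biUnion_le (hp₀ : 0 ≤ p) (hp₁ : p ≤ 1) {ι : Type*} (I : Finset ι)
    (A : ι → Set (SimpleGraph (Fin n))) :
    erProb n p (⋃ i ∈ I, A i) ≤ ∑ i ∈ I, erProb n p (A i) := by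
  have := sub_nonneg.2 hp₁
  simp only [erProb]
  rw [sum_comm]
  refine sum_le_sum fun G _ => ?_
  by_cases hG : G ∈ ⋃ i ∈ I, A i
  · obtain ⟨i, hi, hGi⟩ := Set.mem_iUnion₂.1 hG
    calc _ = (A i).indicator _ G := by rw [Set.indicator_of_mem hG, Set.indicator_of_mem hGi]
      _ ≤ _ := single_le_sum (fun j _ => Set.indicator_nonneg (fun G _ => by positivity) G) hi
  · rw [Set.indicator_of_notMem hG]
    exact sum_nonneg fun j _ => Set.indicator_nonneg (fun G _ => by positivity) G

theorem erProb_setOf_subset_edgeFinset_le (hp₀ : 0 ≤ p) (S : Finset (Sym2 (Fin n))) :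
    erProb n p {G | S ⊆ G.edgeFinset} ≤ p ^ #S := by
  by_cases hS : S ⊆ (⊤ : SimpleGraph (Fin n)).edgeFinset
  · exact (erProb_setOf_subset_edgeFinset p hS).le
  · have hempty : {G : SimpleGraph (Fin n) | S ⊆ G.edgeFinset} = ∅ :=
      Set.eq_empty_of_forall_notMem fun G hG => hS (hG.trans (edgeFinset_mono le_top))
    rw [hempty, ← Set.compl_univ, erProb_compl, erProb_univ, sub_self]
    positivity

theorem erProb_le_choose_mul_pow (hp₀ : 0 ≤ p) (hp₁ : p ≤ 1) (P : Finset (Sym2 (Fin n)))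
    (k : ℕ) :
    erProb n p {G | k ≤ #(G.edgeFinset ∩ P)} ≤ (#P).choose k * p ^ k := by
  have hcover : {G : SimpleGraph (Fin n) | k ≤ #(G.edgeFinset ∩ P)} ⊆
      ⋃ S ∈ P.powersetCard k, {G | S ⊆ G.edgeFinset} := by
    intro G hG
    obtain ⟨S, hS, hSk⟩ := exists_subset_card_eq hG
    exact Set.mem_iUnion₂.2 ⟨S, mem_powersetCard.2 ⟨hS.trans inter_subset_right, hSk⟩,
      hS.trans inter_subset_left⟩
  calc erProb n p {G | k ≤ #(G.edgeFinset ∩ P)}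
      ≤ ∑ S ∈ P.powersetCard k, erProb n p {G | S ⊆ G.edgeFinset} :=
        (erProb_mono hp₀ hp₁ hcover).trans (erProb_biUnion_le hp₀ hp₁ _ _)
    _ ≤ ∑ S ∈ P.powersetCard k, p ^ k := sum_le_sum fun S hS => by
        simpa [(mem_powersetCard.1 hS).2] using erProb_setOf_subset_edgeFinset_le hp₀ S
    _ = (#P).choose k * p ^ k := by rw [sum_const, card_powersetCard, nsmul_eq_mul]

end erProb

theorem SimpleGraph.ncard_edgeSet_induce {V : Type*} [Fintype V] [DecidableEq V]
    (G : SimpleGraph V) [DecidableRel G.Adj] (s : Set V) [DecidablePred (· ∈ s)] :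
    (G.induce s).edgeSet.ncard = #(G.edgeFinset ∩ s.toFinset.sym2) := by
  rw [← map_edgeFinset_induce, card_map, ← coe_edgeFinset, Set.ncard_coe_finset]

theorem Nat.choose_le_exp_one_mul_div_pow (m k : ℕ) :
    (m.choose k : ℝ) ≤ (exp 1 * m / k) ^ k := by
  rcases k.eq_zero_or_pos with rfl | hk
  · simp
  have hk' : (0 : ℝ) < k := by exact_mod_cast hk
  calc (m.choose k : ℝ) ≤ m ^ k / k.factorial := Nat.choose_le_pow_div k m
    _ = (m / k) ^ k * (k ^ k / k.factorial) := by
        rw [div_pow]; field_simp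
    _ ≤ (m / k) ^ k * exp k := by gcongr; exact pow_div_factorial_le_exp _ hk'.le k
    _ = (exp 1 * m / k) ^ k := by rw [← exp_one_pow]; ring

/-- `sparseConst c θ * (t / n) ^ θ = (e n / t) * (e c t / ((1 + θ) n)) ^ (1 + θ)`, the base of the
first-moment bound for sets of size `t`. -/
noncomputable def sparseConst (c θ : ℝ) : ℝ := exp 1 * (exp 1 * c / (1 + θ)) ^ (1 + θ)

theorem choose_mul_choose_mul_pow_le {c θ : ℝ} (hc : 0 < c) (hθ : 0 ≤ θ) {n t K : ℕ}
    (ht : 1 ≤ t) (htn : exp 1 * c * t ≤ (1 + θ) * n) (hK : (1 + θ) * t ≤ K) :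
    n.choose t * (t ^ 2).choose K * (c / n) ^ K ≤ (sparseConst c θ * (t / n) ^ θ) ^ t := by
  have ht' : (1 : ℝ) ≤ t := by exact_mod_cast ht
  have hn : (0 : ℝ) < n := by
    have : 0 < exp 1 * c * t := by positivity
    nlinarith
  have hK' : (0 : ℝ) < K := by nlinarith
  set z := exp 1 * c / (1 + θ) * (t / n) with hz
  have hz0 : 0 < z := by positivity
  have hz1 : z ≤ 1 := by
    rw [hz, div_mul_div_comm, div_le_one (by positivity)]
    nlinarith
  have hchoose : ((t ^ 2).choose K : ℝ) * (c / n) ^ K ≤ z ^ K :=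
    calc ((t ^ 2).choose K : ℝ) * (c / n) ^ K
        ≤ (exp 1 * (t ^ 2 : ℕ) / K) ^ K * (c / n) ^ K := by
          gcongr; exact Nat.choose_le_exp_one_mul_div_pow _ _
      _ = (exp 1 * c * t / K * (t / n)) ^ K := by push_cast; rw [← mul_pow]; ring
      _ ≤ z ^ K := by
          have hcK : exp 1 * c * t / K ≤ exp 1 * c / (1 + θ) := by
            rw [div_le_div_iff₀ hK' (by positivity)]
            nlinarith [mul_pos (exp_pos 1) hc]
          rw [hz]
          gcongr (?_ * _) ^ _
  have hzK : z ^ K ≤ z ^ ((1 + θ) * t) := by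
    rw [← rpow_natCast]
    exact rpow_le_rpow_of_exponent_ge hz0 hz1 hK
  have hbase : exp 1 * n / t * z ^ (1 + θ) = sparseConst c θ * (t / n) ^ θ := by
    rw [hz, mul_rpow (by positivity) (by positivity), rpow_add (by positivity : (0 : ℝ) < t / n),
      rpow_one, sparseConst]
    field_simp
  calc (n.choose t : ℝ) * (t ^ 2).choose K * (c / n) ^ K
      ≤ (exp 1 * n / t) ^ t * z ^ ((1 + θ) * t) := by
        rw [mul_assoc]
        gcongr
        · exact Nat.choose_le_exp_one_mul_div_pow _ _
        · exact hchoose.trans hzK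
    _ = (sparseConst c θ * (t / n) ^ θ) ^ t := by
        rw [rpow_mul hz0.le, rpow_natCast, ← mul_pow, hbase]

theorem choose_mul_choose_mul_pow_le_mul_half_pow {c θ δ : ℝ} (hc : 0 < c) (hθ₀ : 0 < θ)
    (hθ₁ : θ ≤ 1) (hδc : exp 1 * c * δ ≤ 1 + θ) (hδC : sparseConst c θ * δ ^ θ ≤ 1 / 2)
    {n t K : ℕ} (htδ : (t : ℝ) ≤ δ * n) (hK : (1 + θ) * t < K) :
    n.choose t * (t ^ 2).choose K * (c / n) ^ K
      ≤ 2 * sparseConst c θ / n ^ θ * (t * (1 / 2) ^ t) := by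
  rcases t.eq_zero_or_pos with rfl | ht
  · have hK0 : 0 < K := by simpa using hK
    simp [Nat.choose_eq_zero_of_lt hK0]
  have ht' : (1 : ℝ) ≤ t := by exact_mod_cast ht
  have hC : 0 < sparseConst c θ := by unfold sparseConst; positivity
  have hn : (0 : ℝ) < n := Nat.cast_pos.2 <| Nat.pos_of_ne_zero fun h => by
    simp only [h, CharP.cast_eq_zero, mul_zero] at htδ; linarith
  have htn : t / n ≤ δ := by rwa [div_le_iff₀ hn]
  set β := sparseConst c θ * (t / n) ^ θ with hβ
  have hβ₀ : 0 ≤ β := by positivity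
  have hβ_half : β ≤ 1 / 2 := by
    refine le_trans ?_ hδC
    rw [hβ]
    gcongr
  have hβ_le : β ≤ sparseConst c θ * t / n ^ θ :=
    calc β = sparseConst c θ * t ^ θ / n ^ θ := by
          rw [hβ, div_rpow (by positivity) hn.le, mul_div_assoc]
      _ ≤ sparseConst c θ * t / n ^ θ := by
          gcongr
          exact rpow_le_self_of_one_le ht' hθ₁
  calc (n.choose t : ℝ) * (t ^ 2).choose K * (c / n) ^ K ≤ β ^ t :=
        choose_mul_choose_mul_pow_le hc hθ₀.le ht (by nlinarith [mul_pos (exp_pos 1) hc]) hK.le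
    _ = β * β ^ (t - 1) := by rw [← pow_succ', Nat.sub_add_cancel ht]
    _ ≤ sparseConst c θ * t / n ^ θ * (1 / 2) ^ (t - 1) := by gcongr
    _ = 2 * sparseConst c θ / n ^ θ * (t * (1 / 2) ^ t) := by
        rw [← Nat.sub_add_cancel ht, pow_succ, Nat.add_sub_cancel]
        ring

theorem sum_range_mul_half_pow_le_two (m : ℕ) : ∑ t ∈ range m, (t : ℝ) * (1 / 2) ^ t ≤ 2 := by
  have hr : ‖(1 / 2 : ℝ)‖ < 1 := by norm_num
  calc ∑ t ∈ range m, (t : ℝ) * (1 / 2) ^ t ≤ ∑' t : ℕ, (t : ℝ) * (1 / 2) ^ t :=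
        (hasSum_coe_mul_geometric_of_norm_lt_one hr).summable.sum_le_tsum _
          fun t _ => by positivity
    _ = 2 := by rw [tsum_coe_mul_geometric_of_norm_lt_one hr]; norm_num

theorem Nat.choose_succ_two_le_sq (t : ℕ) : (t + 1).choose 2 ≤ t ^ 2 := by
  rw [Nat.choose_two_right, Nat.add_sub_cancel]
  exact Nat.div_le_of_le_mul (by nlinarith)

theorem setOf_exists_dense_subset_biUnion {n : ℕ} {a δ : ℝ} (ha : 0 ≤ a) :
    {G : SimpleGraph (Fin n) | ∃ T : Set (Fin n), (T.ncard : ℝ) ≤ δ * n ∧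
        a * T.ncard < (G.induce T).edgeSet.ncard} ⊆
      ⋃ T ∈ ({T | (#T : ℝ) ≤ δ * n} : Finset (Finset (Fin n))),
        {G | ⌊a * #T⌋₊ + 1 ≤ #(G.edgeFinset ∩ T.sym2)} := by
  rintro G ⟨T, hTδ, hTdense⟩
  rw [Set.ncard_eq_toFinset_card'] at hTδ hTdense
  rw [G.ncard_edgeSet_induce] at hTdense
  refine Set.mem_iUnion₂.2 ⟨T.toFinset, by simpa using hTδ, ?_⟩
  exact Nat.floor_lt (by positivity) |>.2 hTdense

theorem erProb_exists_dense_le {c θ δ : ℝ} (hc : 0 < c) (hθ₀ : 0 < θ) (hθ₁ : θ ≤ 1)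
    (hδc : exp 1 * c * δ ≤ 1 + θ) (hδC : sparseConst c θ * δ ^ θ ≤ 1 / 2) {n : ℕ}
    (hcn : c ≤ n) :
    erProb n (c / n) {G | ∃ T : Set (Fin n), (T.ncard : ℝ) ≤ δ * n ∧
        (1 + θ) * T.ncard < (G.induce T).edgeSet.ncard}
      ≤ 4 * sparseConst c θ / n ^ θ := by
  have hp₀ : 0 ≤ c / n := by positivity
  have hp₁ : c / n ≤ 1 := div_le_one_of_le₀ hcn (by positivity)
  have hcover := setOf_exists_dense_subset_biUnion (n := n) (δ := δ) (by positivity : 0 ≤ 1 + θ)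
  set K : ℕ → ℕ := fun t => ⌊(1 + θ) * t⌋₊ + 1 with hK
  have hKt (t : ℕ) : (1 + θ) * t < K t := by
    simpa [hK] using Nat.lt_floor_add_one ((1 + θ) * t)
  set small : Finset (Finset (Fin n)) := {T | (#T : ℝ) ≤ δ * n}
  set C := sparseConst c θ
  have hC : 0 < C := by unfold C sparseConst; positivity
  have hsize (t : ℕ) : (n.choose t : ℝ) *
        (if (t : ℝ) ≤ δ * n then (t ^ 2).choose (K t) * (c / n) ^ K t else 0)
      ≤ 2 * C / n ^ θ * (t * (1 / 2) ^ t) := by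
    split_ifs with htδ
    · rw [← mul_assoc]
      exact choose_mul_choose_mul_pow_le_mul_half_pow hc hθ₀ hθ₁ hδc hδC htδ (hKt t)
    · rw [mul_zero]; positivity
  calc erProb n (c / n) _
      ≤ ∑ T ∈ small, erProb n (c / n) {G | K #T ≤ #(G.edgeFinset ∩ T.sym2)} :=
        (erProb_mono hp₀ hp₁ hcover).trans (erProb_biUnion_le hp₀ hp₁ _ _)
    _ ≤ ∑ T ∈ small, ((#T ^ 2).choose (K #T) : ℝ) * (c / n) ^ K #T := by
        refine sum_le_sum fun T _ => (erProb_le_choose_mul_pow hp₀ hp₁ _ _).trans ?_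
        gcongr
        rw [card_sym2]
        exact Nat.choose_succ_two_le_sq _
    _ = ∑ t ∈ range (n + 1), (n.choose t : ℝ) *
          (if (t : ℝ) ≤ δ * n then (t ^ 2).choose (K t) * (c / n) ^ K t else 0) := by
        rw [sum_filter, ← powerset_univ, sum_powerset_apply_card
          (fun t => if (t : ℝ) ≤ δ * n then ((t ^ 2).choose (K t) : ℝ) * (c / n) ^ K t else 0),
          card_univ, Fintype.card_fin]
        simp only [nsmul_eq_mul]
    _ ≤ ∑ t ∈ range (n + 1), 2 * C / n ^ θ * (t * (1 / 2) ^ t) := sum_le_sum fun t _ => hsize t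
    _ ≤ 2 * C / n ^ θ * 2 := by
        rw [← mul_sum]
        exact mul_le_mul_of_nonneg_left (sum_range_mul_half_pow_le_two _) (by positivity)
    _ = 4 * C / n ^ θ := by ring

theorem exists_pos_mul_le_and_sparseConst_mul_rpow_le {c θ : ℝ} (hc : 0 < c) (hθ : 0 < θ) :
    ∃ δ > 0, exp 1 * c * δ ≤ 1 + θ ∧ sparseConst c θ * δ ^ θ ≤ 1 / 2 := by
  have hC : 0 < sparseConst c θ := by unfold sparseConst; positivity
  refine ⟨min ((1 + θ) / (exp 1 * c)) ((2 * sparseConst c θ)⁻¹ ^ θ⁻¹), by positivity, ?_, ?_⟩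
  · calc exp 1 * c * min ((1 + θ) / (exp 1 * c)) _ ≤ exp 1 * c * ((1 + θ) / (exp 1 * c)) := by
          gcongr; exact min_le_left _ _
      _ = 1 + θ := by field_simp
  · calc sparseConst c θ * (min _ ((2 * sparseConst c θ)⁻¹ ^ θ⁻¹)) ^ θ
        ≤ sparseConst c θ * ((2 * sparseConst c θ)⁻¹ ^ θ⁻¹) ^ θ := by
          gcongr; exact min_le_right _ _
      _ = 1 / 2 := by
          rw [rpow_inv_rpow (by positivity) hθ.ne']
          field_simp

/-- For every `c > 0` and `ε > 0` there exists `δ > 0` such that whp the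
random graph `G ∈ 𝒢(n, c/n)` has the property that every vertex set `T` with `|T| ≤ δ n`
spans at most `(1 + ε/3)|T|` edges. -/
theorem er_sparse_sets_whp (c ε : ℝ) (hc : 0 < c) (hε : 0 < ε) :
    ∃ δ > (0 : ℝ), Tendsto (fun n : ℕ =>
      erProb n (c / n) {G | ∀ T : Set (Fin n), (T.ncard : ℝ) ≤ δ * n →
        ((G.induce T).edgeSet.ncard : ℝ) ≤ (1 + ε / 3) * T.ncard})
      atTop (nhds 1) := by
  -- capping θ at 1 is what makes `(t / n) ^ θ ≤ t / n ^ θ` for `t ≥ 1`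
  set θ := min (ε / 3) 1
  have hθ₀ : 0 < θ := lt_min (by positivity) one_pos
  obtain ⟨δ, hδ, hδc, hδC⟩ := exists_pos_mul_le_and_sparseConst_mul_rpow_le hc hθ₀
  have hp : ∀ᶠ n : ℕ in atTop, 0 ≤ c / n ∧ c / n ≤ 1 ∧ c ≤ n := by
    filter_upwards [eventually_ge_atTop ⌈c⌉₊] with n hn
    have hcn : c ≤ n := Nat.ceil_le.1 hn
    exact ⟨by positivity, div_le_one_of_le₀ hcn (by positivity), hcn⟩
  have hbound : Tendsto (fun n : ℕ => 1 - 4 * sparseConst c θ / n ^ θ) atTop (nhds 1) := by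
    simpa using (tendsto_const_nhds.div_atTop
      ((tendsto_rpow_atTop hθ₀).comp tendsto_natCast_atTop_atTop)).const_sub 1
  refine ⟨δ, hδ, tendsto_of_tendsto_of_tendsto_of_le_of_le' hbound tendsto_const_nhds ?_ ?_⟩
  · filter_upwards [hp] with n ⟨hp₀, hp₁, hcn⟩
    rw [sub_le_comm, ← erProb_compl]
    refine le_trans (erProb_mono hp₀ hp₁ fun G hG => ?_)
      (erProb_exists_dense_le hc hθ₀ (min_le_right _ _) hδc hδC hcn)
    simp only [Set.mem_compl_iff, Set.mem_ofPred_eq, not_forall, not_le] at hG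
    obtain ⟨T, hTδ, hTdense⟩ := hG
    exact ⟨T, hTδ, lt_of_le_of_lt (by gcongr; exact min_le_left _ _) hTdense⟩
  · filter_upwards [hp] with n hn
    exact erProb_le_one hn.1 hn.2.1 _
end
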